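/- Let A be an N×N real matrix, σ an N×d real matrix, and suppose the Kalman-type condition Span{columns of σ, columns of Aσ} = ℝᴺ holds. Then for every t > 0 the Gramian Σ̂(t) = ∫₀ᵗ e^{−sA} σσᵀ e^{−sAᵀ} ds is positive definite. -/

import Mathlib

open Matrix MeasureTheory

/-- The controllability Gramian `Σ̂(t) = ∫₀ᵗ e^{−sA} σσᵀ e^{−sAᵀ} ds`
(entrywise integral). -/
noncomputable def gramian (N d : ℕ) (A : Matrix (Fin N) (Fin N) ℝ)
    (σ : Matrix (Fin N) (Fin d) ℝ) (t : ℝ) : Matrix (Fin N) (Fin N) ℝ :=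
  Matrix.of fun i j =>
    ∫ s in (0 : ℝ)..t,
      (NormedSpace.exp ((-s) • A) * (σ * σᵀ) * NormedSpace.exp ((-s) • Aᵀ)) i j

/-! The quadratic form of the Gramian at `x` is `∫₀ᵗ |σᵀ e^{-sAᵀ} x|² ds`. If it vanishes, the
continuous integrand vanishes on `[0, t]`, hence so does `g s = σᵀ e^{-sAᵀ} x`. Then both
`g 0 = σᵀ x` and `g' 0 = -(Aσ)ᵀ x` vanish: `x` is orthogonal to the columns of `σ` and `Aσ`,
which span `ℝᴺ`, so `x = 0`. -/

open Set

theorem Continuous.eqOn_zero_of_intervalIntegral_eq_zero {f : ℝ → ℝ} {a b : ℝ} (hab : a < b)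
    (hf : Continuous f) (hf0 : 0 ≤ f) (h : ∫ s in a..b, f s = 0) : EqOn f 0 (Icc a b) := by
  have hae : f =ᵐ[volume.restrict (Ioc a b)] 0 :=
    (intervalIntegral.integral_eq_zero_iff_of_le_of_nonneg_ae hab.le
      (Filter.Eventually.of_forall hf0) (hf.intervalIntegrable a b)).1 h
  have hIoc : EqOn f 0 (Ioc a b) := by
    refine Measure.eqOn_of_ae_eq hae hf.continuousOn continuousOn_const ?_
    rw [interior_Ioc, closure_Ioo hab.ne]
    exact Ioc_subset_Icc_self
  simpa only [closure_Ioc hab.ne] using hIoc.closure hf continuous_const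

theorem HasDerivAt.eq_zero_of_eqOn_Icc {E : Type*} [NormedAddCommGroup E] [NormedSpace ℝ E]
    {f : ℝ → E} {f' : E} {a b : ℝ} (hab : a < b) (hf : HasDerivAt f f' a)
    (h0 : EqOn f 0 (Icc a b)) : f' = 0 :=
  have ha : a ∈ Icc a b := left_mem_Icc.2 hab.le
  (uniqueDiffOn_Icc hab a ha).eq_deriv _ hf.hasDerivWithinAt
    ((hasDerivWithinAt_const a _ 0).congr (fun _ hy => h0 hy) (h0 ha))

namespace Matrix

variable {m n : Type*}

theorem eq_zero_of_span_eq_top_of_dotProduct_eq_zero {R : Type*} [Fintype n] [Ring R]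
    [LinearOrder R] [IsStrictOrderedRing R] {S : Set (n → R)} (hS : Submodule.span R S = ⊤)
    {x : n → R} (hx : ∀ v ∈ S, v ⬝ᵥ x = 0) : x = 0 := by
  have hspan : ∀ v ∈ Submodule.span R S, v ⬝ᵥ x = 0 := fun v hv => by
    induction hv using Submodule.span_induction with
    | mem v hv => exact hx v hv
    | zero => exact zero_dotProduct x
    | add v w _ _ hv hw => rw [add_dotProduct, hv, hw, add_zero]
    | smul c v _ hv => rw [smul_dotProduct, hv, smul_zero]
  exact dotProduct_self_eq_zero.1 (hspan x (hS ▸ Submodule.mem_top))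

theorem hasDerivAt_mulVec_exp_smul_mulVec [Fintype m] [Fintype n] [DecidableEq n]
    (M : Matrix m n ℝ) (B : Matrix n n ℝ) (x : n → ℝ) (t : ℝ) :
    HasDerivAt (fun s : ℝ => M *ᵥ (NormedSpace.exp (s • B) *ᵥ x))
      (M *ᵥ ((B * NormedSpace.exp (t • B)) *ᵥ x)) t := by
  open scoped Norms.Operator in
  exact (mulVecLin M ∘ₗ (mulVecBilin ℝ ℝ).flip x).toContinuousLinearMap.hasFDerivAt.comp_hasDerivAt
    t (hasDerivAt_exp_smul_const' B t)

theorem dotProduct_mulVec_of_intervalIntegral [Fintype n] {E : ℝ → Matrix n n ℝ} (hE : Continuous E)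
    (a b : ℝ) (x : n → ℝ) :
    x ⬝ᵥ (of (fun i j => ∫ s in a..b, E s i j) *ᵥ x) = ∫ s in a..b, x ⬝ᵥ (E s *ᵥ x) := by
  have hcont : ∀ i j, Continuous fun s => x i * (E s i j * x j) :=
    fun i j => ((hE.matrix_elem i j).mul continuous_const).const_mul _
  simp only [dotProduct, mulVec, of_apply, Finset.mul_sum]
  rw [intervalIntegral.integral_finsetSum fun i _ =>
    (continuous_finsetSum _ fun j _ => hcont i j).intervalIntegrable a b]
  refine Finset.sum_congr rfl fun i _ => ?_
  rw [intervalIntegral.integral_finsetSum fun j _ => (hcont i j).intervalIntegrable a b]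
  simp only [intervalIntegral.integral_const_mul, intervalIntegral.integral_mul_const]

theorem isHermitian_of_intervalIntegral {E : ℝ → Matrix n n ℝ} (hE : ∀ s, (E s).IsHermitian)
    (a b : ℝ) : (of fun i j => ∫ s in a..b, E s i j).IsHermitian :=
  IsHermitian.ext fun i j => by
    simp only [of_apply, star_trivial]
    congr 1 with s
    simpa using (hE s).apply i j

theorem posDef_of_intervalIntegral_transpose_mul_self [Fintype m] [Fintype n]
    {C : ℝ → Matrix m n ℝ} (hC : Continuous C) {a b : ℝ} (hab : a < b)
    (hC_inj : ∀ x, (∀ s ∈ Icc a b, C s *ᵥ x = 0) → x = 0) :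
    (of fun i j => ∫ s in a..b, ((C s)ᵀ * C s) i j).PosDef := by
  have hquad (s : ℝ) (x : n → ℝ) : x ⬝ᵥ (((C s)ᵀ * C s) *ᵥ x) = (C s *ᵥ x) ⬝ᵥ (C s *ᵥ x) := by
    rw [← mulVec_mulVec, dotProduct_mulVec, vecMul_transpose]
  have hnonneg (x : n → ℝ) (s : ℝ) : 0 ≤ (C s *ᵥ x) ⬝ᵥ (C s *ᵥ x) := by
    simpa using dotProduct_star_self_nonneg (C s *ᵥ x)
  rw [posDef_iff_dotProduct_mulVec]
  refine ⟨isHermitian_of_intervalIntegral (fun s => ?_) a b, fun x hx => ?_⟩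
  · simpa using isHermitian_conjTranspose_mul_self (C s)
  rw [star_trivial, dotProduct_mulVec_of_intervalIntegral (hC.matrix_transpose.matrix_mul hC)]
  simp only [hquad]
  refine (intervalIntegral.integral_nonneg hab.le fun s _ => hnonneg x s).lt_of_ne fun h => ?_
  refine hx (hC_inj x fun s hs => dotProduct_self_eq_zero.1 ?_)
  exact Continuous.eqOn_zero_of_intervalIntegral_eq_zero hab (by fun_prop) (hnonneg x) h.symm hs

end Matrix

/-- Under the Kalman-type condition
`Span{columns of σ, columns of Aσ} = ℝᴺ`, the Gramian
`Σ̂(t) = ∫₀ᵗ e^{−sA} σσᵀ e^{−sAᵀ} ds` is positive definite for every `t > 0`. -/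
theorem gramian_posDef (N d : ℕ) (A : Matrix (Fin N) (Fin N) ℝ)
    (σ : Matrix (Fin N) (Fin d) ℝ)
    (hKalman : Submodule.span ℝ
        ((Set.range fun j : Fin d => fun i : Fin N => σ i j) ∪
          (Set.range fun j : Fin d => fun i : Fin N => (A * σ) i j)) = ⊤)
    (t : ℝ) (ht : 0 < t) :
    (gramian N d A σ t).PosDef := by
  set C : ℝ → Matrix (Fin d) (Fin N) ℝ := fun s => σᵀ * NormedSpace.exp (s • -Aᵀ)
  have hgram : gramian N d A σ t = of fun i j => ∫ s in 0..t, ((C s)ᵀ * C s) i j := by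
    ext i j
    simp [gramian, C, transpose_mul, ← exp_transpose, Matrix.mul_assoc]
  rw [hgram]
  have hC_cont : Continuous C := by
    open scoped Norms.Operator in
    exact continuous_const.matrix_mul (NormedSpace.exp_continuous.comp (by fun_prop))
  refine posDef_of_intervalIntegral_transpose_mul_self hC_cont ht fun x hx => ?_
  have hC (s : ℝ) : C s *ᵥ x = σᵀ *ᵥ (NormedSpace.exp (s • -Aᵀ) *ᵥ x) := (mulVec_mulVec _ _ _).symm
  have hσ : σᵀ *ᵥ x = 0 := by simpa [hC] using hx 0 (left_mem_Icc.2 ht.le)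
  have hAσ : (A * σ)ᵀ *ᵥ x = 0 := by
    have := (hasDerivAt_mulVec_exp_smul_mulVec σᵀ (-Aᵀ) x 0).eq_zero_of_eqOn_Icc ht
      fun s hs => (hC s).symm.trans (hx s hs)
    rw [transpose_mul, ← mulVec_mulVec]
    simpa [neg_mulVec, mulVec_neg] using this
  refine eq_zero_of_span_eq_top_of_dotProduct_eq_zero hKalman ?_
  -- `(Mᵀ *ᵥ x) j` is by definition the dot product of the `j`-th column of `M` with `x`.
  rintro _ (⟨j, rfl⟩ | ⟨j, rfl⟩)
  exacts [congrFun hσ j, congrFun hAσ j]
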